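/- Let (Σ_A^+, σ_A) be a one-sided subshift of finite type with metric d_θ for some θ ∈ (0,1), with Σ_A^+ ≠ ∅, let α ∈ (0,1], and let φ : Σ_A^+ → ℝ be α-Hölder continuous with respect to d_θ. Then for all a₀ > 0, b₀ > 0, and ε > 0, there exists a constant C_ε > 0, depending only on ε, a₀, b₀, θ, α, and φ, such that for every k ≥ 1 and every s ∈ ℂ with |Re s| ≤ a₀ and |Im s| ≥ b₀, Σ_{|ω| = k} ‖ L_{sφ}^k χ_ω ‖_{C^{0,α}} ≤ C_ε · |Im s| · θ^α · e^{k ( P((Re s)φ) + ε )}, where the sum is over all admissible words ω of length k. -/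

import Mathlib

open Filter Topology

variable {S : Type*}

/-- The carrier set of the one-sided subshift of finite type defined by the
transition matrix `A`: sequences `x : ℕ → S` with `A (x i) (x (i+1)) = 1` for all `i`. -/
def SFT (A : S → S → Bool) : Set (ℕ → S) :=
  {x | ∀ i : ℕ, A (x i) (x (i + 1)) = true}

/-- The left-shift map `σ_A`. -/
def shift (x : ℕ → S) : ℕ → S := fun n => x (n + 1)

/-- An admissible word of length `n`, encoded as `ω : Fin n → S` with
`A(ω_i, ω_{i+1}) = 1` for `0 ≤ i < n - 1`. -/
def AdmissibleWord (A : S → S → Bool) {n : ℕ} (ω : Fin n → S) : Prop :=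
  ∀ i : Fin n, ∀ h : i.val + 1 < n, A (ω i) (ω ⟨i.val + 1, h⟩) = true

/-- The cylinder set `C_ω` of a word `ω`. -/
def cylinder (A : S → S → Bool) {n : ℕ} (ω : Fin n → S) : Set (ℕ → S) :=
  {x | x ∈ SFT A ∧ ∀ i : Fin n, x i.val = ω i}

/-- Concatenation `ωx`: prepend the word `ω` to the sequence `x`. -/
def wordConcat {n : ℕ} (ω : Fin n → S) (x : ℕ → S) : ℕ → S :=
  fun i => if h : i < n then ω ⟨i, h⟩ else x (i - n)

/-- Prepend a single symbol to a sequence. -/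
def scons (j : S) (x : ℕ → S) : ℕ → S := fun i => Nat.casesOn i j x

/-- The periodic extension `ω^∞ = ωωω⋯` of a word of positive length. -/
def periodicExt {n : ℕ} (hn : 0 < n) (ω : Fin n → S) : ℕ → S :=
  fun i => ω ⟨i % n, Nat.mod_lt i hn⟩

/-- The set of fixed points of `σ_A^n` in the subshift. -/
def perSet (A : S → S → Bool) (n : ℕ) : Set (ℕ → S) :=
  {x | x ∈ SFT A ∧ shift^[n] x = x}

/-- Birkhoff sum of a real-valued function under the shift. -/
def birkhoffR (φ : (ℕ → S) → ℝ) (n : ℕ) (x : ℕ → S) : ℝ :=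
  ∑ j ∈ Finset.range n, φ (shift^[j] x)

/-- Birkhoff sum of a complex-valued function under the shift. -/
noncomputable def birkhoffC (ψ : (ℕ → S) → ℂ) (n : ℕ) (x : ℕ → S) : ℂ :=
  ∑ j ∈ Finset.range n, ψ (shift^[j] x)

-- The metric `d_θ`: `d_θ(x, y) = θ^m` where `m` is the smallest index with
-- `x_m ≠ y_m`, and `d_θ(x, x) = 0`.
open Classical in
noncomputable def dtheta (θ : ℝ) (x y : ℕ → S) : ℝ :=
  if h : x = y then 0
  else θ ^ Nat.find (show ∃ m, x m ≠ y m by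
    by_contra hc
    push_neg at hc
    exact h (funext hc))

/-- The Ruelle operator `L_ψ` evaluated on the subshift:
`(L_ψ u)(x) = Σ_{y ∈ σ_A^{-1}(x)} e^{ψ(y)} u(y)`. -/
noncomputable def ruelle [Fintype S] (A : S → S → Bool) (ψ : (ℕ → S) → ℂ)
    (u : (ℕ → S) → ℂ) : (ℕ → S) → ℂ :=
  fun x => ∑ j : S,
    if A j (x 0) = true then Complex.exp (ψ (scons j x)) * u (scons j x) else 0

/-- The characteristic function `χ_ω` of the cylinder `C_ω`. -/
noncomputable def chi (A : S → S → Bool) {n : ℕ} (ω : Fin n → S) : (ℕ → S) → ℂ :=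
  (cylinder A ω).indicator 1

open Classical in
/-- The finite set of admissible words of length `n`. -/
noncomputable def admissibleWords (A : S → S → Bool) [Fintype S] (n : ℕ) :
    Finset (Fin n → S) :=
  Finset.univ.filter fun ω => AdmissibleWord A ω

/-- The Hölder seminorm `|u|_α` (with respect to `d_θ`, on the subshift). -/
noncomputable def holderSeminormC (A : S → S → Bool) (θ α : ℝ)
    (u : (ℕ → S) → ℂ) : ℝ :=
  sSup {c | ∃ x ∈ SFT A, ∃ y ∈ SFT A, x ≠ y ∧
    c = ‖u x - u y‖ / dtheta θ x y ^ α}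

/-- The supremum norm `‖u‖_∞` over the subshift. -/
noncomputable def supNormC (A : S → S → Bool) (u : (ℕ → S) → ℂ) : ℝ :=
  sSup ((fun x => ‖u x‖) '' SFT A)

/-- The Hölder norm `‖u‖_{C^{0,α}} = |u|_α + ‖u‖_∞`. -/
noncomputable def holderNormC (A : S → S → Bool) (θ α : ℝ)
    (u : (ℕ → S) → ℂ) : ℝ :=
  holderSeminormC A θ α u + supNormC A u

/-- The Hölder seminorm of a real-valued function. -/
noncomputable def holderSeminormR (A : S → S → Bool) (θ α : ℝ)
    (φ : (ℕ → S) → ℝ) : ℝ :=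
  sSup {c | ∃ x ∈ SFT A, ∃ y ∈ SFT A, x ≠ y ∧
    c = |φ x - φ y| / dtheta θ x y ^ α}

/-- The supremum norm of a real-valued function over the subshift. -/
noncomputable def supNormR (A : S → S → Bool) (φ : (ℕ → S) → ℝ) : ℝ :=
  sSup ((fun x => |φ x|) '' SFT A)

/-- The Hölder norm of a real-valued function. -/
noncomputable def holderNormR (A : S → S → Bool) (θ α : ℝ)
    (φ : (ℕ → S) → ℝ) : ℝ :=
  holderSeminormR A θ α φ + supNormR A φ

/-- The operator norm of `L_ψ^k` on `C^{0,α}((Σ_A^+, d_θ), ℂ)`. -/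
noncomputable def ruelleOpNorm (A : S → S → Bool) [Fintype S]
    (θ α : ℝ) (ψ : (ℕ → S) → ℂ) (k : ℕ) : ℝ :=
  sSup {c | ∃ u : (ℕ → S) → ℂ, holderNormC A θ α u ≤ 1 ∧
    c = holderNormC A θ α ((ruelle A ψ)^[k] u)}

/-- `Z_m(aφ) = Σ_{|ω|=m} sup_{y ∈ C_ω} e^{a S_mφ(y)}`. -/
noncomputable def Zword (A : S → S → Bool) [Fintype S] (φ : (ℕ → S) → ℝ)
    (a : ℝ) (m : ℕ) : ℝ :=
  ∑ ω ∈ admissibleWords A m,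
    sSup ((fun y => Real.exp (a * birkhoffR φ m y)) '' cylinder A ω)

/-- `P(aφ) = limsup_{m → ∞} (1/m) log Z_m(aφ)`. -/
noncomputable def pressureA (A : S → S → Bool) [Fintype S] (φ : (ℕ → S) → ℝ)
    (a : ℝ) : ℝ :=
  Filter.limsup (fun m : ℕ => Real.log (Zword A φ a m) / m) Filter.atTop

section Basics
variable {S : Type*}

lemma shift_iterate_apply (x : ℕ → S) (m n : ℕ) : shift^[m] x n = x (n + m) := by
  induction m generalizing x n with
  | zero => rfl
  | succ m ih =>
    rw [Function.iterate_succ_apply]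
    show shift^[m] (shift x) n = _
    rw [ih]; rfl

lemma shift_mem_SFT {A : S → S → Bool} {x : ℕ → S} (hx : x ∈ SFT A) : shift x ∈ SFT A :=
  fun i => hx (i + 1)

lemma shift_iterate_mem_SFT {A : S → S → Bool} {x : ℕ → S} (hx : x ∈ SFT A) (m : ℕ) :
    shift^[m] x ∈ SFT A := by
  induction m with
  | zero => exact hx
  | succ m ih => rw [Function.iterate_succ_apply']; exact shift_mem_SFT ih

lemma scons_zero (j : S) (x : ℕ → S) : scons j x 0 = j := rfl
lemma scons_succ (j : S) (x : ℕ → S) (i : ℕ) : scons j x (i + 1) = x i := rfl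

lemma scons_mem_SFT {A : S → S → Bool} {x : ℕ → S} (hx : x ∈ SFT A) {j : S}
    (hj : A j (x 0) = true) : scons j x ∈ SFT A := by
  intro i
  cases i with
  | zero => exact hj
  | succ i => exact hx i

lemma wordConcat_lt {n : ℕ} (ω : Fin n → S) (x : ℕ → S) {i : ℕ} (h : i < n) :
    wordConcat ω x i = ω ⟨i, h⟩ := dif_pos h

lemma wordConcat_ge {n : ℕ} (ω : Fin n → S) (x : ℕ → S) {i : ℕ} (h : ¬ i < n) :
    wordConcat ω x i = x (i - n) := dif_neg h

lemma wordConcat_mem_SFT {A : S → S → Bool} {x : ℕ → S} (hx : x ∈ SFT A)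
    {n : ℕ} (hn : 0 < n) {ω : Fin n → S} (hω : AdmissibleWord A ω)
    (hlast : A (ω ⟨n - 1, Nat.sub_lt hn one_pos⟩) (x 0) = true) :
    wordConcat ω x ∈ SFT A := by
  intro i
  rcases lt_trichotomy (i + 1) n with h | h | h
  · rw [wordConcat_lt ω x (Nat.lt_of_succ_lt h), wordConcat_lt ω x h]
    exact hω ⟨i, Nat.lt_of_succ_lt h⟩ h
  · rw [wordConcat_lt ω x (h ▸ Nat.lt_succ_self i), wordConcat_ge ω x (by omega)]
    have : (⟨i, h ▸ Nat.lt_succ_self i⟩ : Fin n) = ⟨n - 1, Nat.sub_lt hn one_pos⟩ := by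
      simp only [Fin.mk.injEq]; omega
    rw [this]
    have : i + 1 - n = 0 := by omega
    rw [this]; exact hlast
  · rw [wordConcat_ge ω x (by omega), wordConcat_ge ω x (by omega)]
    have : i + 1 - n = (i - n) + 1 := by omega
    rw [this]; exact hx _

lemma wordConcat_mem_cylinder {A : S → S → Bool} {x : ℕ → S} (hx : x ∈ SFT A)
    {n : ℕ} (hn : 0 < n) {ω : Fin n → S} (hω : AdmissibleWord A ω)
    (hlast : A (ω ⟨n - 1, Nat.sub_lt hn one_pos⟩) (x 0) = true) :
    wordConcat ω x ∈ cylinder A ω := by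
  refine ⟨wordConcat_mem_SFT hx hn hω hlast, fun i => ?_⟩
  rw [wordConcat_lt ω x i.isLt]

lemma shift_wordConcat {n : ℕ} (ω : Fin (n + 1) → S) (x : ℕ → S) :
    shift (wordConcat ω x) = wordConcat (fun i : Fin n => ω i.succ) x := by
  funext i
  show wordConcat ω x (i + 1) = _
  by_cases h : i < n
  · rw [wordConcat_lt ω x (by omega : i + 1 < n + 1), wordConcat_lt _ x h]
    congr 1
  · rw [wordConcat_ge ω x (by omega), wordConcat_ge _ x h]
    congr 1; omega

lemma scons_wordConcat {n : ℕ} (ω : Fin (n + 1) → S) (x : ℕ → S) :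
    scons (ω 0) (wordConcat (fun i : Fin n => ω i.succ) x) = wordConcat ω x := by
  funext i
  cases i with
  | zero => rw [scons_zero, wordConcat_lt ω x (Nat.succ_pos n)]; rfl
  | succ i =>
    rw [scons_succ]
    by_cases h : i < n
    · rw [wordConcat_lt _ x h, wordConcat_lt ω x (by omega : i + 1 < n + 1)]
      congr 1
    · rw [wordConcat_ge _ x h, wordConcat_ge ω x (by omega)]
      congr 1; omega

end Basics
section Dtheta
variable {S : Type*}

lemma dtheta_nonneg {θ : ℝ} (hθ : 0 < θ) (x y : ℕ → S) : 0 ≤ dtheta θ x y := by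
  unfold dtheta
  split
  · exact le_refl 0
  · positivity

lemma dtheta_le_pow {θ : ℝ} (hθ0 : 0 < θ) (hθ1 : θ ≤ 1) {x y : ℕ → S} {m : ℕ}
    (h : ∀ i < m, x i = y i) : dtheta θ x y ≤ θ ^ m := by
  classical
  unfold dtheta
  split
  · positivity
  · next hxy =>
    apply pow_le_pow_of_le_one (le_of_lt hθ0) hθ1
    rw [Nat.le_find_iff]
    intro n hn
    simp only [ne_eq, not_not]
    exact h n hn

lemma rpow_pow_comm {θ : ℝ} (hθ0 : 0 ≤ θ) (α : ℝ) (m : ℕ) :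
    (θ ^ m) ^ α = (θ ^ α) ^ m := by
  rw [← Real.rpow_natCast θ m, ← Real.rpow_natCast (θ ^ α) m,
    ← Real.rpow_mul hθ0, ← Real.rpow_mul hθ0, mul_comm]

lemma dtheta_rpow_le {θ α : ℝ} (hθ : θ ∈ Set.Ioo (0:ℝ) 1) (hα : α ∈ Set.Ioc (0:ℝ) 1)
    {x y : ℕ → S} {m : ℕ} (h : ∀ i < m, x i = y i) :
    dtheta θ x y ^ α ≤ (θ ^ α) ^ m := by
  rw [← rpow_pow_comm hθ.1.le]
  exact Real.rpow_le_rpow (dtheta_nonneg hθ.1 x y) (dtheta_le_pow hθ.1 hθ.2.le h) hα.1.le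

/-- agreement of shifted concatenations -/
lemma shift_wordConcat_agree {n : ℕ} (ω : Fin n → S) {x y : ℕ → S} {m : ℕ}
    (h : ∀ i < m, x i = y i) (j : ℕ) (hj : j ≤ n) :
    ∀ i < n - j + m, shift^[j] (wordConcat ω x) i = shift^[j] (wordConcat ω y) i := by
  intro i hi
  rw [shift_iterate_apply, shift_iterate_apply]
  by_cases hcase : i + j < n
  · rw [wordConcat_lt ω x hcase, wordConcat_lt ω y hcase]
  · rw [wordConcat_ge ω x hcase, wordConcat_ge ω y hcase]
    exact h _ (by omega)

end Dtheta
section Formula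
variable {S : Type*}

lemma birkhoffC_succ (ψ : (ℕ → S) → ℂ) (n : ℕ) (y : ℕ → S) :
    birkhoffC ψ (n + 1) y = ψ y + birkhoffC ψ n (shift y) := by
  unfold birkhoffC
  rw [Finset.sum_range_succ']
  simp [Function.iterate_succ_apply, add_comm]

lemma scons_mem_SFT_iff {A : S → S → Bool} (j : S) (x : ℕ → S) :
    scons j x ∈ SFT A ↔ A j (x 0) = true ∧ x ∈ SFT A := by
  constructor
  · intro h
    exact ⟨h 0, fun i => h (i + 1)⟩
  · rintro ⟨h1, h2⟩
    exact scons_mem_SFT h2 h1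

lemma mem_cylinder_scons_iff {A : S → S → Bool} {n : ℕ} (ω : Fin (n + 1) → S)
    (j : S) (x : ℕ → S) :
    scons j x ∈ cylinder A ω ↔
      A j (x 0) = true ∧ x ∈ SFT A ∧ j = ω 0 ∧ ∀ i : Fin n, x i.val = ω i.succ := by
  constructor
  · rintro ⟨hS, hm⟩
    rw [scons_mem_SFT_iff] at hS
    refine ⟨hS.1, hS.2, hm 0, fun i => ?_⟩
    have := hm i.succ
    rwa [show (i.succ : Fin (n+1)).val = i.val + 1 from rfl, scons_succ] at this
  · rintro ⟨h1, h2, h3, h4⟩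
    refine ⟨(scons_mem_SFT_iff j x).mpr ⟨h1, h2⟩, fun i => ?_⟩
    rcases Fin.eq_zero_or_eq_succ i with h | ⟨i', rfl⟩
    · subst h; exact h3
    · rw [show (i'.succ : Fin (n+1)).val = i'.val + 1 from rfl, scons_succ]
      exact h4 i'

lemma admissibleWord_one {A : S → S → Bool} (ω : Fin 1 → S) : AdmissibleWord A ω := by
  intro i h
  omega

lemma admissibleWord_succ_iff {A : S → S → Bool} {n : ℕ} (ω : Fin (n + 2) → S) :
    AdmissibleWord A ω ↔
      A (ω 0) (ω 1) = true ∧ AdmissibleWord A (fun i : Fin (n + 1) => ω i.succ) := by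
  have e0 : (0 : Fin (n + 2)) = ⟨0, by omega⟩ := by ext; simp
  have e1 : (1 : Fin (n + 2)) = ⟨1, by omega⟩ := by ext; simp
  constructor
  · intro h
    constructor
    · rw [e0, e1]
      exact h ⟨0, by omega⟩ (show 0 + 1 < n + 2 by omega)
    · intro i hi
      have hv : (i.succ : Fin (n + 2)).val + 1 < n + 2 := by
        simp only [Fin.val_succ]
        omega
      exact h i.succ hv
  · rintro ⟨h1, h2⟩ i hi
    obtain ⟨iv, hiv⟩ := i
    cases iv with
    | zero =>
      rw [e0, e1] at h1
      exact h1
    | succ iv =>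
      have hi' : iv + 1 + 1 < n + 2 := hi
      exact h2 ⟨iv, by omega⟩ (show iv + 1 < n + 1 by omega)

lemma wordConcat_one (ω : Fin 1 → S) (x : ℕ → S) :
    wordConcat ω x = scons (ω 0) x := by
  funext i
  cases i with
  | zero => rw [wordConcat_lt ω x one_pos]; rfl
  | succ i => rw [wordConcat_ge ω x (by omega), scons_succ]; congr 1

lemma ruelle_apply_mul_chi [Fintype S] (A : S → S → Bool) (ψ : (ℕ → S) → ℂ)
    (g : (ℕ → S) → ℂ) {n : ℕ} (ω : Fin (n + 1) → S) (x : ℕ → S) :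
    ruelle A ψ (fun y => g y * chi A ω y) x =
      if A (ω 0) (x 0) = true then
        Complex.exp (ψ (scons (ω 0) x)) * (g (scons (ω 0) x) * chi A ω (scons (ω 0) x))
      else 0 := by
  unfold ruelle
  rw [Finset.sum_eq_single (ω 0)]
  · intro j _ hj
    have hnm : scons j x ∉ cylinder A ω := by
      rw [mem_cylinder_scons_iff]
      rintro ⟨-, -, h3, -⟩
      exact hj h3
    simp [chi, Set.indicator_of_notMem hnm]
  · intro h
    exact absurd (Finset.mem_univ _) h

lemma ruelle_zero [Fintype S] (A : S → S → Bool) (ψ : (ℕ → S) → ℂ) :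
    ruelle A ψ (fun _ => 0) = fun _ => 0 := by
  funext x
  unfold ruelle
  simp

lemma ruelle_iterate_zero [Fintype S] (A : S → S → Bool) (ψ : (ℕ → S) → ℂ) (k : ℕ) :
    (ruelle A ψ)^[k] (fun _ => 0) = fun _ => 0 := by
  induction k with
  | zero => rfl
  | succ k ih => rw [Function.iterate_succ_apply, ruelle_zero, ih]

open Classical in
lemma ruelle_iterate_mul_chi [Fintype S] (A : S → S → Bool) (ψ : (ℕ → S) → ℂ) :
    ∀ k : ℕ, ∀ hk : 0 < k, ∀ g : (ℕ → S) → ℂ, ∀ ω : Fin k → S, ∀ x ∈ SFT A,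
      (ruelle A ψ)^[k] (fun y => g y * chi A ω y) x =
        if AdmissibleWord A ω ∧ A (ω ⟨k - 1, Nat.sub_lt hk one_pos⟩) (x 0) = true then
          g (wordConcat ω x) * Complex.exp (birkhoffC ψ k (wordConcat ω x))
        else 0 := by
  intro k
  induction k with
  | zero => intro hk; omega
  | succ n ih =>
    intro hk g ω x hx
    match n, ih with
    | 0, _ =>
      rw [Function.iterate_one, ruelle_apply_mul_chi]
      have hcyl : scons (ω 0) x ∈ cylinder A ω ↔ A (ω 0) (x 0) = true := by
        rw [mem_cylinder_scons_iff]
        exact ⟨fun h => h.1, fun h => ⟨h, hx, rfl, fun i => i.elim0⟩⟩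
      have hB : birkhoffC ψ (0 + 1) (scons (ω 0) x) = ψ (scons (ω 0) x) := by
        unfold birkhoffC
        simp
      rw [wordConcat_one, hB]
      have h0 : (⟨0, Nat.sub_lt one_pos one_pos⟩ : Fin 1) = 0 := rfl
      by_cases hA : A (ω 0) (x 0) = true
      · rw [if_pos hA, if_pos ⟨admissibleWord_one ω, h0 ▸ hA⟩]
        rw [chi, Set.indicator_of_mem (hcyl.mpr hA)]
        simp [mul_comm]
      · rw [if_neg hA, if_neg (by rintro ⟨-, h⟩; exact hA (h0 ▸ h))]
    | n + 1, ih =>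
      rw [Function.iterate_succ_apply]
      set ω' : Fin (n + 1) → S := fun i => ω i.succ with hω'
      by_cases hadm01 : A (ω 0) (ω 1) = true
      · have hLu : ruelle A ψ (fun y => g y * chi A ω y) =
            fun y => (g (scons (ω 0) y) * Complex.exp (ψ (scons (ω 0) y))) * chi A ω' y := by
          funext y
          show ruelle A ψ (fun y => g y * chi A ω y) y =
            (g (scons (ω 0) y) * Complex.exp (ψ (scons (ω 0) y))) * chi A ω' y
          rw [ruelle_apply_mul_chi]
          by_cases hcy : y ∈ cylinder A ω'
          · obtain ⟨hyS, hym⟩ := id hcy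
            have hy0 : y 0 = ω 1 := by
              have := hym 0
              simpa [hω'] using this
            have hA : A (ω 0) (y 0) = true := hy0 ▸ hadm01
            rw [if_pos hA]
            have hmem : scons (ω 0) y ∈ cylinder A ω :=
              (mem_cylinder_scons_iff ω (ω 0) y).mpr ⟨hA, hyS, rfl, fun i => hym i⟩
            rw [chi, Set.indicator_of_mem hmem, chi, Set.indicator_of_mem hcy]
            simp only [Pi.one_apply]
            ring
          · have h2 : chi A ω' y = 0 := by rw [chi, Set.indicator_of_notMem hcy]
            rw [h2, mul_zero]
            split
            · have hnm : scons (ω 0) y ∉ cylinder A ω := by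
                rw [mem_cylinder_scons_iff]
                rintro ⟨h1', h2', -, h4'⟩
                exact hcy ⟨h2', fun i => h4' i⟩
              rw [chi, Set.indicator_of_notMem hnm]
              simp
            · rfl
        rw [hLu, ih (Nat.succ_pos n) _ ω' x hx]
        have hcond : (AdmissibleWord A ω' ∧
            A (ω' ⟨n + 1 - 1, Nat.sub_lt (Nat.succ_pos n) one_pos⟩) (x 0) = true) ↔
            (AdmissibleWord A ω ∧
            A (ω ⟨n + 2 - 1, Nat.sub_lt hk one_pos⟩) (x 0) = true) := by
          rw [admissibleWord_succ_iff]
          have : ω' ⟨n + 1 - 1, Nat.sub_lt (Nat.succ_pos n) one_pos⟩ =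
              ω ⟨n + 2 - 1, Nat.sub_lt hk one_pos⟩ := rfl
          rw [this]
          tauto
        split
        · next h =>
          rw [if_pos (hcond.mp h)]
          rw [scons_wordConcat]
          have hsh : shift (wordConcat ω x) = wordConcat ω' x := shift_wordConcat ω x
          rw [show birkhoffC ψ (n + 2) (wordConcat ω x) =
              ψ (wordConcat ω x) + birkhoffC ψ (n + 1) (wordConcat ω' x) by
            rw [birkhoffC_succ, hsh]]
          rw [Complex.exp_add]
          ring
        · next h =>
          rw [if_neg (fun hc => h (hcond.mpr hc))]
      · have hLu : ruelle A ψ (fun y => g y * chi A ω y) = fun _ => 0 := by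
          funext y
          rw [ruelle_apply_mul_chi]
          split
          · have hnm : scons (ω 0) y ∉ cylinder A ω := by
              rw [mem_cylinder_scons_iff]
              rintro ⟨h1', h2', -, h4'⟩
              have : y 0 = ω 1 := by simpa using h4' 0
              rw [this] at h1'
              exact hadm01 h1'
            rw [chi, Set.indicator_of_notMem hnm]
            simp
          · rfl
        rw [hLu, ruelle_iterate_zero]
        show (0 : ℂ) = _
        rw [if_neg]
        rintro ⟨hadm, -⟩
        exact hadm01 ((admissibleWord_succ_iff ω).mp hadm).1

end Formula
section Estimates
variable {S : Type*}

lemma geom_bound (τ : ℝ) (h0 : 0 ≤ τ) (h1 : τ < 1) (k : ℕ) :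
    ∑ i ∈ Finset.range k, τ^i ≤ 1/(1-τ) := by
  have h2 : (τ ^ k - 1) / (τ - 1) = (1 - τ^k) / (1 - τ) := by
    rw [div_eq_div_iff (by linarith) (by linarith)]
    ring
  rw [geom_sum_eq (ne_of_lt h1) k, h2, div_le_div_iff₀ (by linarith) (by linarith)]
  have : τ^k ≥ 0 := by positivity
  nlinarith

lemma birkhoffC_const_mul (s : ℂ) (φ : (ℕ → S) → ℝ) (k : ℕ) (y : ℕ → S) :
    birkhoffC (fun x => s * (φ x : ℂ)) k y = s * ((birkhoffR φ k y : ℝ) : ℂ) := by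
  unfold birkhoffC birkhoffR
  rw [← Finset.mul_sum]
  norm_cast

lemma birkhoffR_abs_le {A : S → S → Bool} {φ : (ℕ → S) → ℝ} {F : ℝ}
    (hF : ∀ y ∈ SFT A, |φ y| ≤ F) {y : ℕ → S} (hy : y ∈ SFT A) (k : ℕ) :
    |birkhoffR φ k y| ≤ k * F := by
  unfold birkhoffR
  calc |∑ j ∈ Finset.range k, φ (shift^[j] y)|
      ≤ ∑ j ∈ Finset.range k, |φ (shift^[j] y)| := Finset.abs_sum_le_sum_abs _ _
    _ ≤ ∑ _j ∈ Finset.range k, F := by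
        refine Finset.sum_le_sum fun j _ => hF _ (shift_iterate_mem_SFT hy j)
    _ = k * F := by simp [mul_comm]

lemma birkhoff_diff_le {A : S → S → Bool} {θ α : ℝ}
    (hθ : θ ∈ Set.Ioo (0:ℝ) 1) (hα : α ∈ Set.Ioc (0:ℝ) 1)
    {φ : (ℕ → S) → ℝ} {c' : ℝ} (hc' : 0 ≤ c')
    (hHol : ∀ x ∈ SFT A, ∀ y ∈ SFT A, |φ x - φ y| ≤ c' * dtheta θ x y ^ α)
    {k : ℕ} (hk : 0 < k) {ω : Fin k → S} (hω : AdmissibleWord A ω)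
    {x y : ℕ → S} (hx : x ∈ SFT A) (hy : y ∈ SFT A)
    (hAx : A (ω ⟨k - 1, Nat.sub_lt hk one_pos⟩) (x 0) = true)
    (hAy : A (ω ⟨k - 1, Nat.sub_lt hk one_pos⟩) (y 0) = true)
    {m : ℕ} (hagree : ∀ i < m, x i = y i) :
    |birkhoffR φ k (wordConcat ω x) - birkhoffR φ k (wordConcat ω y)| ≤
      (c' / (1 - θ ^ α)) * (θ ^ α) ^ m := by
  set τ : ℝ := θ ^ α with hτ
  have hτ0 : 0 < τ := Real.rpow_pos_of_pos hθ.1 α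
  have hτ1 : τ < 1 := Real.rpow_lt_one hθ.1.le hθ.2 hα.1
  have hX : wordConcat ω x ∈ SFT A := wordConcat_mem_SFT hx hk hω hAx
  have hY : wordConcat ω y ∈ SFT A := wordConcat_mem_SFT hy hk hω hAy
  have step : ∀ j < k, |φ (shift^[j] (wordConcat ω x)) - φ (shift^[j] (wordConcat ω y))| ≤
      c' * τ ^ (k - j + m) := by
    intro j hj
    have hXj := shift_iterate_mem_SFT hX j
    have hYj := shift_iterate_mem_SFT hY j
    have h1 := hHol _ hXj _ hYj
    have h2 : dtheta θ (shift^[j] (wordConcat ω x)) (shift^[j] (wordConcat ω y)) ^ α ≤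
        τ ^ (k - j + m) :=
      dtheta_rpow_le hθ hα (shift_wordConcat_agree ω hagree j (le_of_lt hj))
    calc |φ (shift^[j] (wordConcat ω x)) - φ (shift^[j] (wordConcat ω y))|
        ≤ c' * dtheta θ _ _ ^ α := h1
      _ ≤ c' * τ ^ (k - j + m) := by
          exact mul_le_mul_of_nonneg_left h2 hc'
  calc |birkhoffR φ k (wordConcat ω x) - birkhoffR φ k (wordConcat ω y)|
      = |∑ j ∈ Finset.range k, (φ (shift^[j] (wordConcat ω x)) -
          φ (shift^[j] (wordConcat ω y)))| := by
        unfold birkhoffR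
        rw [Finset.sum_sub_distrib]
    _ ≤ ∑ j ∈ Finset.range k, |φ (shift^[j] (wordConcat ω x)) -
          φ (shift^[j] (wordConcat ω y))| := Finset.abs_sum_le_sum_abs _ _
    _ ≤ ∑ j ∈ Finset.range k, c' * τ ^ (k - j + m) := by
        refine Finset.sum_le_sum fun j hj => step j (Finset.mem_range.mp hj)
    _ = c' * (τ ^ (1 + m) * ∑ j ∈ Finset.range k, τ ^ j) := by
        rw [← Finset.mul_sum]
        congr 1
        rw [Finset.mul_sum]
        rw [← Finset.sum_range_reflect (fun j => τ ^ (1 + m) * τ ^ j) k]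
        refine Finset.sum_congr rfl fun j hj => ?_
        rw [Finset.mem_range] at hj
        rw [← pow_add]
        congr 1
        omega
    _ ≤ c' * (τ ^ (1 + m) * (1 / (1 - τ))) := by
        refine mul_le_mul_of_nonneg_left ?_ hc'
        exact mul_le_mul_of_nonneg_left (geom_bound τ hτ0.le hτ1 k) (by positivity)
    _ ≤ (c' / (1 - τ)) * τ ^ m := by
        have h1τ : 0 < 1 - τ := by linarith
        have e : (c' / (1 - τ)) * τ ^ m = c' * (τ ^ m * (1 / (1 - τ))) := by ring
        rw [e]
        refine mul_le_mul_of_nonneg_left ?_ hc'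
        refine mul_le_mul_of_nonneg_right ?_ (by positivity)
        rw [pow_add, pow_one]
        nlinarith [pow_nonneg hτ0.le m]

lemma abs_exp_mul_re (s : ℂ) (B : ℝ) :
    ‖Complex.exp (s * (B : ℂ))‖ = Real.exp (s.re * B) := by
  rw [Complex.norm_exp]
  congr 1
  simp [Complex.mul_re]

end Estimates
section PerWord
variable {S : Type*}

lemma dtheta_spec {θ : ℝ} {x y : ℕ → S} (hxy : x ≠ y) :
    ∃ m : ℕ, dtheta θ x y = θ ^ m ∧ (∀ i < m, x i = y i) := by
  classical
  have hex : ∃ m, x m ≠ y m := by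
    by_contra hc
    push_neg at hc
    exact hxy (funext hc)
  refine ⟨Nat.find hex, ?_, ?_⟩
  · rw [dtheta, dif_neg hxy]
  · intro i hi
    by_contra hne
    exact Nat.find_min hex hi hne

lemma dtheta_rpow_pos {θ α : ℝ} (hθ : 0 < θ) {x y : ℕ → S} (hxy : x ≠ y) :
    0 < dtheta θ x y ^ α := by
  obtain ⟨m, hdeq, -⟩ := dtheta_spec (θ := θ) hxy
  rw [hdeq]
  exact Real.rpow_pos_of_pos (pow_pos hθ m) α

open Classical in
lemma ruelle_iterate_chi_formula [Fintype S] {A : S → S → Bool}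
    (φ : (ℕ → S) → ℝ) (s : ℂ) {k : ℕ} (hk : 0 < k) (ω : Fin k → S)
    {x : ℕ → S} (hx : x ∈ SFT A) :
    (ruelle A (fun x => s * (φ x : ℂ)))^[k] (chi A ω) x =
      if AdmissibleWord A ω ∧ A (ω ⟨k - 1, Nat.sub_lt hk one_pos⟩) (x 0) = true then
        Complex.exp (s * ((birkhoffR φ k (wordConcat ω x) : ℝ) : ℂ))
      else 0 := by
  rw [show chi A ω = (fun y => (fun _ : ℕ → S => (1:ℂ)) y * chi A ω y) from
    funext fun y => by simp]
  rw [ruelle_iterate_mul_chi A _ k hk (fun _ => (1:ℂ)) ω x hx]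
  rw [birkhoffC_const_mul]
  simp only [one_mul]

lemma holderNormC_ruelle_iterate_chi_le [Fintype S]
    {A : S → S → Bool} {θ α : ℝ} (hθ : θ ∈ Set.Ioo (0:ℝ) 1) (hα : α ∈ Set.Ioc (0:ℝ) 1)
    {φ : (ℕ → S) → ℝ} {c' F : ℝ} (hc' : 0 ≤ c')
    (hHol : ∀ x ∈ SFT A, ∀ y ∈ SFT A, |φ x - φ y| ≤ c' * dtheta θ x y ^ α)
    (hF : ∀ y ∈ SFT A, |φ y| ≤ F)
    {k : ℕ} (hk : 0 < k) (ω : Fin k → S) (s : ℂ) :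
    holderNormC A θ α ((ruelle A (fun x => s * (φ x : ℂ)))^[k] (chi A ω)) ≤
      ((2 * (c' / (1 - θ ^ α)) + 2) * (1 + ‖s‖) + 1) *
        sSup ((fun y => Real.exp (s.re * birkhoffR φ k y)) '' cylinder A ω) := by
  classical
  set τ : ℝ := θ ^ α with hτdef
  have hτ0 : 0 < τ := Real.rpow_pos_of_pos hθ.1 α
  have hτ1 : τ < 1 := Real.rpow_lt_one hθ.1.le hθ.2 hα.1
  set c₁ : ℝ := c' / (1 - τ) with hc₁def
  have hc₁ : 0 ≤ c₁ := div_nonneg hc' (by linarith)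
  set u := (ruelle A (fun x => s * (φ x : ℂ)))^[k] (chi A ω) with hu
  set M := sSup ((fun y => Real.exp (s.re * birkhoffR φ k y)) '' cylinder A ω) with hM
  have habss : 0 ≤ ‖s‖ := norm_nonneg s
  have hbdd : BddAbove ((fun y => Real.exp (s.re * birkhoffR φ k y)) '' cylinder A ω) := by
    refine ⟨Real.exp (|s.re| * (k * F)), ?_⟩
    rintro _ ⟨y, hy, rfl⟩
    have hB := birkhoffR_abs_le hF hy.1 k
    refine Real.exp_le_exp.mpr ?_
    calc s.re * birkhoffR φ k y ≤ |s.re * birkhoffR φ k y| := le_abs_self _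
      _ = |s.re| * |birkhoffR φ k y| := abs_mul _ _
      _ ≤ |s.re| * (k * F) := by
          refine mul_le_mul_of_nonneg_left hB (abs_nonneg _)
  have hM0 : 0 ≤ M := Real.sSup_nonneg (by rintro _ ⟨y, hy, rfl⟩; positivity)
  have hmemle : ∀ y ∈ cylinder A ω, Real.exp (s.re * birkhoffR φ k y) ≤ M :=
    fun y hy => le_csSup hbdd ⟨y, hy, rfl⟩
  have habs : ∀ x ∈ SFT A, ‖u x‖ ≤ M := by
    intro x hx
    rw [hu, ruelle_iterate_chi_formula φ s hk ω hx]
    split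
    · next h =>
      rw [abs_exp_mul_re]
      exact hmemle _ (wordConcat_mem_cylinder hx hk h.1 h.2)
    · simpa using hM0
  have hsup : supNormC A u ≤ M := by
    refine Real.sSup_le ?_ hM0
    rintro _ ⟨x, hx, rfl⟩
    exact habs x hx
  have hdiff : ∀ x ∈ SFT A, ∀ y ∈ SFT A, x ≠ y →
      ‖u x - u y‖ ≤
        ((2 * c₁ + 2) * (1 + ‖s‖)) * M * dtheta θ x y ^ α := by
    intro x hx y hy hxy
    obtain ⟨m, hdeq, hagree⟩ := dtheta_spec (θ := θ) hxy
    have hdα : dtheta θ x y ^ α = τ ^ m := by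
      rw [hdeq, hτdef, rpow_pow_comm hθ.1.le]
    rw [hdα]
    have hτm : (0:ℝ) ≤ τ ^ m := by positivity
    rcases Nat.eq_zero_or_pos m with hm0 | hm1
    · subst hm0
      rw [pow_zero, mul_one]
      calc ‖u x - u y‖ ≤ ‖u x‖ + ‖u y‖ := by
            exact norm_sub_le _ _
        _ ≤ M + M := add_le_add (habs x hx) (habs y hy)
        _ ≤ (2 * c₁ + 2) * (1 + ‖s‖) * M := by
            nlinarith [mul_nonneg habss hM0, mul_nonneg hc₁ hM0,
              mul_nonneg (mul_nonneg hc₁ habss) hM0]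
    · have hx0 : x 0 = y 0 := hagree 0 hm1
      rw [hu, ruelle_iterate_chi_formula φ s hk ω hx,
        ruelle_iterate_chi_formula φ s hk ω hy]
      by_cases hcnd : AdmissibleWord A ω ∧
          A (ω ⟨k - 1, Nat.sub_lt hk one_pos⟩) (x 0) = true
      · have hcndy : AdmissibleWord A ω ∧
            A (ω ⟨k - 1, Nat.sub_lt hk one_pos⟩) (y 0) = true := ⟨hcnd.1, hx0 ▸ hcnd.2⟩
        rw [if_pos hcnd, if_pos hcndy]
        set Bx := birkhoffR φ k (wordConcat ω x) with hBx
        set By := birkhoffR φ k (wordConcat ω y) with hBy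
        have hBd : |Bx - By| ≤ c₁ * τ ^ m :=
          birkhoff_diff_le hθ hα hc' hHol hk hcnd.1 hx hy hcnd.2 hcndy.2 hagree
        have hxM : Real.exp (s.re * Bx) ≤ M :=
          hmemle _ (wordConcat_mem_cylinder hx hk hcnd.1 hcnd.2)
        have hyM : Real.exp (s.re * By) ≤ M :=
          hmemle _ (wordConcat_mem_cylinder hy hk hcndy.1 hcndy.2)
        have hwabs : ‖s * (Bx:ℂ) - s * (By:ℂ)‖ ≤
            ‖s‖ * (c₁ * τ ^ m) := by
          rw [show s * (Bx:ℂ) - s * (By:ℂ) = s * ((Bx:ℂ) - (By:ℂ)) by ring, norm_mul,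
            ← Complex.ofReal_sub, Complex.norm_real, Real.norm_eq_abs]
          exact mul_le_mul_of_nonneg_left hBd habss
        have key : ‖Complex.exp (s * (Bx:ℂ)) - Complex.exp (s * (By:ℂ))‖ ≤
            2 * (‖s‖ * (c₁ * τ ^ m)) * M := by
          by_cases hsmall : ‖s‖ * (c₁ * τ ^ m) ≤ 1
          · have e1 : Complex.exp (s * (Bx:ℂ)) - Complex.exp (s * (By:ℂ)) =
                Complex.exp (s * (By:ℂ)) *
                  (Complex.exp (s * (Bx:ℂ) - s * (By:ℂ)) - 1) := by
              rw [mul_sub, mul_one, ← Complex.exp_add,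
                show s * (By:ℂ) + (s * (Bx:ℂ) - s * (By:ℂ)) = s * (Bx:ℂ) by ring]
            rw [e1, norm_mul]
            have h3 := Complex.norm_exp_sub_one_le (le_trans hwabs hsmall)
            calc ‖Complex.exp (s * (By:ℂ))‖ *
                  ‖Complex.exp (s * (Bx:ℂ) - s * (By:ℂ)) - 1‖
                ≤ M * (2 * (‖s‖ * (c₁ * τ ^ m))) := by
                  refine mul_le_mul ?_ ?_ (norm_nonneg _) hM0
                  · rw [abs_exp_mul_re]; exact hyM
                  · exact le_trans h3 (by nlinarith)
              _ = 2 * (‖s‖ * (c₁ * τ ^ m)) * M := by ring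
          · push_neg at hsmall
            calc ‖Complex.exp (s * (Bx:ℂ)) - Complex.exp (s * (By:ℂ))‖
                ≤ ‖Complex.exp (s * (Bx:ℂ))‖ +
                  ‖Complex.exp (s * (By:ℂ))‖ := by
                  exact norm_sub_le _ _
              _ ≤ M + M := by
                  rw [abs_exp_mul_re, abs_exp_mul_re]
                  exact add_le_add hxM hyM
              _ ≤ 2 * (‖s‖ * (c₁ * τ ^ m)) * M := by nlinarith
        calc ‖Complex.exp (s * (Bx:ℂ)) - Complex.exp (s * (By:ℂ))‖
            ≤ 2 * (‖s‖ * (c₁ * τ ^ m)) * M := key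
          _ ≤ (2 * c₁ + 2) * (1 + ‖s‖) * M * τ ^ m := by
              nlinarith [mul_nonneg hM0 hτm, mul_nonneg (mul_nonneg hc₁ hM0) hτm,
                mul_nonneg (mul_nonneg habss hM0) hτm,
                mul_nonneg (mul_nonneg (mul_nonneg habss hc₁) hM0) hτm]
      · have hcndy : ¬ (AdmissibleWord A ω ∧
            A (ω ⟨k - 1, Nat.sub_lt hk one_pos⟩) (y 0) = true) := by
          rintro ⟨h1, h2⟩
          exact hcnd ⟨h1, hx0 ▸ h2⟩
        rw [if_neg hcnd, if_neg hcndy]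
        simp only [sub_zero, norm_zero]
        positivity
  have hsem : holderSeminormC A θ α u ≤ (2 * c₁ + 2) * (1 + ‖s‖) * M := by
    refine Real.sSup_le ?_ (by positivity)
    rintro _ ⟨x, hx, y, hy, hxy, rfl⟩
    rw [div_le_iff₀ (dtheta_rpow_pos hθ.1 hxy)]
    exact hdiff x hx y hy hxy
  show holderSeminormC A θ α u + supNormC A u ≤ _
  calc holderSeminormC A θ α u + supNormC A u
      ≤ (2 * c₁ + 2) * (1 + ‖s‖) * M + M := add_le_add hsem hsup
    _ = ((2 * c₁ + 2) * (1 + ‖s‖) + 1) * M := by ring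

end PerWord
section Pressure
variable {S : Type*}

lemma exp_image_bddAbove {A : S → S → Bool} {φ : (ℕ → S) → ℝ} {F : ℝ}
    (hF : ∀ y ∈ SFT A, |φ y| ≤ F) (a : ℝ) (m : ℕ) (ω : Fin m → S) :
    BddAbove ((fun y => Real.exp (a * birkhoffR φ m y)) '' cylinder A ω) := by
  refine ⟨Real.exp (|a| * (m * F)), ?_⟩
  rintro _ ⟨y, hy, rfl⟩
  refine Real.exp_le_exp.mpr ?_
  calc a * birkhoffR φ m y ≤ |a * birkhoffR φ m y| := le_abs_self _
    _ = |a| * |birkhoffR φ m y| := abs_mul _ _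
    _ ≤ |a| * (m * F) := mul_le_mul_of_nonneg_left (birkhoffR_abs_le hF hy.1 m) (abs_nonneg _)

lemma Zword_nonneg [Fintype S] (A : S → S → Bool) (φ : (ℕ → S) → ℝ) (a : ℝ) (m : ℕ) :
    0 ≤ Zword A φ a m :=
  Finset.sum_nonneg fun ω _ => Real.sSup_nonneg (by rintro _ ⟨y, hy, rfl⟩; positivity)

lemma birkhoffR_add (φ : (ℕ → S) → ℝ) (m n : ℕ) (y : ℕ → S) :
    birkhoffR φ (m + n) y = birkhoffR φ m y + birkhoffR φ n (shift^[m] y) := by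
  unfold birkhoffR
  rw [Finset.sum_range_add]
  congr 1
  refine Finset.sum_congr rfl fun j _ => ?_
  congr 1
  rw [add_comm, Function.iterate_add_apply]

lemma mem_admissibleWords [Fintype S] {A : S → S → Bool} {n : ℕ} {ω : Fin n → S} :
    ω ∈ admissibleWords A n ↔ AdmissibleWord A ω := by
  classical
  rw [admissibleWords]
  simp

lemma admissibleWord_pre {A : S → S → Bool} {m n : ℕ} {ω : Fin (m + n) → S}
    (hω : AdmissibleWord A ω) :
    AdmissibleWord A (fun i : Fin m => ω (Fin.castAdd n i)) := by
  intro i hi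
  exact hω ⟨i.val, by omega⟩ (by omega : (i.val : ℕ) + 1 < m + n)

lemma admissibleWord_suf {A : S → S → Bool} {m n : ℕ} {ω : Fin (m + n) → S}
    (hω : AdmissibleWord A ω) :
    AdmissibleWord A (fun i : Fin n => ω (Fin.natAdd m i)) := by
  intro i hi
  exact hω ⟨m + i.val, by omega⟩ (by omega : m + i.val + 1 < m + n)

set_option maxHeartbeats 1000000 in
lemma Zword_submul [Fintype S] {A : S → S → Bool} {φ : (ℕ → S) → ℝ} {F : ℝ}
    (hF : ∀ y ∈ SFT A, |φ y| ≤ F) (a : ℝ) (m n : ℕ) :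
    Zword A φ a (m + n) ≤ Zword A φ a m * Zword A φ a n := by
  classical
  set pre : (Fin (m + n) → S) → (Fin m → S) := fun ω i => ω (Fin.castAdd n i) with hpre
  set suf : (Fin (m + n) → S) → (Fin n → S) := fun ω i => ω (Fin.natAdd m i) with hsuf
  set f : (Fin m → S) → ℝ :=
    fun u => sSup ((fun y => Real.exp (a * birkhoffR φ m y)) '' cylinder A u) with hf
  set g : (Fin n → S) → ℝ :=
    fun v => sSup ((fun y => Real.exp (a * birkhoffR φ n y)) '' cylinder A v) with hg
  have hf0 : ∀ u, 0 ≤ f u :=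
    fun u => Real.sSup_nonneg (by rintro _ ⟨y, hy, rfl⟩; positivity)
  have hg0 : ∀ v, 0 ≤ g v :=
    fun v => Real.sSup_nonneg (by rintro _ ⟨y, hy, rfl⟩; positivity)
  have hM : ∀ ω ∈ admissibleWords A (m + n),
      sSup ((fun y => Real.exp (a * birkhoffR φ (m + n) y)) '' cylinder A ω) ≤
        f (pre ω) * g (suf ω) := by
    intro ω _
    refine Real.sSup_le ?_ (mul_nonneg (hf0 _) (hg0 _))
    rintro _ ⟨y, hy, rfl⟩
    have hypre : y ∈ cylinder A (pre ω) := ⟨hy.1, fun i => hy.2 (Fin.castAdd n i)⟩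
    have hysuf : shift^[m] y ∈ cylinder A (suf ω) := by
      refine ⟨shift_iterate_mem_SFT hy.1 m, fun i => ?_⟩
      rw [shift_iterate_apply]
      have e : i.val + m = m + i.val := add_comm _ _
      rw [e]
      exact hy.2 (Fin.natAdd m i)
    show Real.exp (a * birkhoffR φ (m + n) y) ≤ f (pre ω) * g (suf ω)
    rw [birkhoffR_add, mul_add, Real.exp_add]
    exact mul_le_mul (le_csSup (exp_image_bddAbove hF a m (pre ω)) ⟨y, hypre, rfl⟩)
      (le_csSup (exp_image_bddAbove hF a n (suf ω)) ⟨shift^[m] y, hysuf, rfl⟩)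
      (Real.exp_pos _).le (hf0 _)
  have hinj : ∀ x ∈ admissibleWords A (m + n), ∀ y ∈ admissibleWords A (m + n),
      (pre x, suf x) = (pre y, suf y) → x = y := by
    intro x _ y _ h
    rw [Prod.mk.injEq] at h
    funext i
    by_cases hlt : i.val < m
    · have e : Fin.castAdd n ⟨i.val, hlt⟩ = i := rfl
      rw [← e]
      exact congrFun h.1 ⟨i.val, hlt⟩
    · have e : Fin.natAdd m ⟨i.val - m, by omega⟩ = i := by
        ext
        simp only [Fin.natAdd_mk]
        omega
      rw [← e]
      exact congrFun h.2 ⟨i.val - m, by omega⟩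
  have step1 : Zword A φ a (m + n) ≤
      ∑ ω ∈ admissibleWords A (m + n), f (pre ω) * g (suf ω) :=
    Finset.sum_le_sum hM
  have step2 : ∑ ω ∈ admissibleWords A (m + n), f (pre ω) * g (suf ω) =
      ∑ p ∈ (admissibleWords A (m + n)).image (fun ω => (pre ω, suf ω)),
        f p.1 * g p.2 :=
    (Finset.sum_image (f := fun p => f p.1 * g p.2) hinj).symm
  have step3 : ∑ p ∈ (admissibleWords A (m + n)).image (fun ω => (pre ω, suf ω)),
        f p.1 * g p.2 ≤
      ∑ p ∈ (admissibleWords A m) ×ˢ (admissibleWords A n), f p.1 * g p.2 := by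
    refine Finset.sum_le_sum_of_subset_of_nonneg ?_ ?_
    · intro p hp
      rw [Finset.mem_image] at hp
      obtain ⟨ω, hω, rfl⟩ := hp
      rw [Finset.mem_product]
      rw [mem_admissibleWords] at hω
      exact ⟨mem_admissibleWords.mpr (admissibleWord_pre hω),
        mem_admissibleWords.mpr (admissibleWord_suf hω)⟩
    · intro p _ _
      exact mul_nonneg (hf0 _) (hg0 _)
  have step4 : ∑ p ∈ (admissibleWords A m) ×ˢ (admissibleWords A n), f p.1 * g p.2 =
      Zword A φ a m * Zword A φ a n := by
    rw [Finset.sum_product]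
    exact (Finset.sum_mul_sum _ _ _ _).symm
  linarith [step1, step2 ▸ step1, step3, step4]

end Pressure
section Pressure2
variable {S : Type*}

/-- The length-`m` prefix of a point of the subshift, as an admissible word. -/
lemma prefix_facts {A : S → S → Bool} {x₀ : ℕ → S} (hx₀ : x₀ ∈ SFT A) (m : ℕ) :
    AdmissibleWord A (fun i : Fin m => x₀ i.val) ∧
      x₀ ∈ cylinder A (fun i : Fin m => x₀ i.val) :=
  ⟨fun i _ => hx₀ i.val, ⟨hx₀, fun _ => rfl⟩⟩

lemma Zword_ge_exp [Fintype S] {A : S → S → Bool} {φ : (ℕ → S) → ℝ} {F : ℝ}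
    (hF : ∀ y ∈ SFT A, |φ y| ≤ F) {x₀ : ℕ → S} (hx₀ : x₀ ∈ SFT A) (a : ℝ) (m : ℕ) :
    Real.exp (a * birkhoffR φ m x₀) ≤ Zword A φ a m := by
  obtain ⟨hadm, hcyl⟩ := prefix_facts hx₀ m
  have h1 : Real.exp (a * birkhoffR φ m x₀) ≤
      sSup ((fun y => Real.exp (a * birkhoffR φ m y)) '' cylinder A (fun i : Fin m => x₀ i.val)) :=
    le_csSup (exp_image_bddAbove hF a m _) ⟨x₀, hcyl, rfl⟩
  refine le_trans h1 ?_
  unfold Zword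
  refine Finset.single_le_sum
    (f := fun ω => sSup ((fun y => Real.exp (a * birkhoffR φ m y)) '' cylinder A ω))
    (fun ω _ => Real.sSup_nonneg ?_) (mem_admissibleWords.mpr hadm)
  rintro _ ⟨y, hy, rfl⟩
  positivity

lemma Zword_pos [Fintype S] {A : S → S → Bool} {φ : (ℕ → S) → ℝ} {F : ℝ}
    (hF : ∀ y ∈ SFT A, |φ y| ≤ F) {x₀ : ℕ → S} (hx₀ : x₀ ∈ SFT A) (a : ℝ) (m : ℕ) :
    0 < Zword A φ a m :=
  lt_of_lt_of_le (Real.exp_pos _) (Zword_ge_exp hF hx₀ a m)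

lemma Zword_le_pow [Fintype S] {A : S → S → Bool} {φ : (ℕ → S) → ℝ} {F : ℝ}
    (hF : ∀ y ∈ SFT A, |φ y| ≤ F) {x₀ : ℕ → S} (hx₀ : x₀ ∈ SFT A) (a : ℝ) :
    ∀ k, 1 ≤ k → Zword A φ a k ≤ (Zword A φ a 1) ^ k := by
  refine Nat.le_induction ?_ ?_
  · simpa using le_refl (Zword A φ a 1)
  · intro k hk ih
    calc Zword A φ a (k + 1) ≤ Zword A φ a k * Zword A φ a 1 := Zword_submul hF a k 1
      _ ≤ (Zword A φ a 1) ^ k * Zword A φ a 1 :=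
          mul_le_mul_of_nonneg_right ih (Zword_pos hF hx₀ a 1).le
      _ = (Zword A φ a 1) ^ (k + 1) := by rw [pow_succ]

lemma Zword_lipschitz [Fintype S] {A : S → S → Bool} {φ : (ℕ → S) → ℝ} {F : ℝ}
    (hF : ∀ y ∈ SFT A, |φ y| ≤ F) (a b : ℝ) (k : ℕ) :
    Zword A φ a k ≤ Real.exp (k * (|a - b| * F)) * Zword A φ b k := by
  unfold Zword
  rw [Finset.mul_sum]
  refine Finset.sum_le_sum fun ω _ => ?_
  have hg0 : 0 ≤ sSup ((fun y => Real.exp (b * birkhoffR φ k y)) '' cylinder A ω) :=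
    Real.sSup_nonneg (by rintro _ ⟨y, hy, rfl⟩; positivity)
  refine Real.sSup_le ?_ (by positivity)
  rintro _ ⟨y, hy, rfl⟩
  have key : Real.exp (a * birkhoffR φ k y) =
      Real.exp ((a - b) * birkhoffR φ k y) * Real.exp (b * birkhoffR φ k y) := by
    rw [← Real.exp_add]
    ring_nf
  show Real.exp (a * birkhoffR φ k y) ≤ _
  rw [key]
  refine mul_le_mul ?_ (le_csSup (exp_image_bddAbove hF b k ω) ⟨y, hy, rfl⟩)
    (Real.exp_pos _).le (Real.exp_pos _).le
  refine Real.exp_le_exp.mpr ?_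
  calc (a - b) * birkhoffR φ k y ≤ |(a - b) * birkhoffR φ k y| := le_abs_self _
    _ = |a - b| * |birkhoffR φ k y| := abs_mul _ _
    _ ≤ |a - b| * (k * F) := mul_le_mul_of_nonneg_left (birkhoffR_abs_le hF hy.1 k) (abs_nonneg _)
    _ = k * (|a - b| * F) := by ring

lemma logZ_div_bounded_above [Fintype S] {A : S → S → Bool} {φ : (ℕ → S) → ℝ} {F : ℝ}
    (hF : ∀ y ∈ SFT A, |φ y| ≤ F) {x₀ : ℕ → S} (hx₀ : x₀ ∈ SFT A) (a : ℝ) :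
    ∀ k : ℕ, 1 ≤ k → Real.log (Zword A φ a k) / k ≤ Real.log (Zword A φ a 1) := by
  intro k hk
  have hk0 : (0:ℝ) < k := by exact_mod_cast hk
  rw [div_le_iff₀ hk0]
  calc Real.log (Zword A φ a k) ≤ Real.log ((Zword A φ a 1) ^ k) :=
        Real.log_le_log (Zword_pos hF hx₀ a k) (Zword_le_pow hF hx₀ a k hk)
    _ = k * Real.log (Zword A φ a 1) := by rw [Real.log_pow]
    _ = Real.log (Zword A φ a 1) * k := mul_comm _ _

lemma logZ_div_bounded_below [Fintype S] {A : S → S → Bool} {φ : (ℕ → S) → ℝ} {F : ℝ}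
    (hF : ∀ y ∈ SFT A, |φ y| ≤ F) {x₀ : ℕ → S} (hx₀ : x₀ ∈ SFT A) (a : ℝ) :
    ∀ k : ℕ, 1 ≤ k → -(|a| * F) ≤ Real.log (Zword A φ a k) / k := by
  intro k hk
  have hk0 : (0:ℝ) < k := by exact_mod_cast hk
  rw [le_div_iff₀ hk0]
  have h1 : a * birkhoffR φ k x₀ ≤ Real.log (Zword A φ a k) := by
    calc a * birkhoffR φ k x₀ = Real.log (Real.exp (a * birkhoffR φ k x₀)) :=
          (Real.log_exp _).symm
      _ ≤ Real.log (Zword A φ a k) :=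
          Real.log_le_log (Real.exp_pos _) (Zword_ge_exp hF hx₀ a k)
  refine le_trans ?_ h1
  have h2 : |a * birkhoffR φ k x₀| ≤ |a| * (k * F) := by
    rw [abs_mul]
    exact mul_le_mul_of_nonneg_left (birkhoffR_abs_le hF hx₀ k) (abs_nonneg _)
  have h3 := neg_abs_le (a * birkhoffR φ k x₀)
  nlinarith [abs_nonneg (a * birkhoffR φ k x₀)]

lemma pressure_bddAbove [Fintype S] {A : S → S → Bool} {φ : (ℕ → S) → ℝ} {F : ℝ}
    (hF : ∀ y ∈ SFT A, |φ y| ≤ F) {x₀ : ℕ → S} (hx₀ : x₀ ∈ SFT A) (a : ℝ) :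
    Filter.IsBoundedUnder (· ≤ ·) Filter.atTop
      (fun k : ℕ => Real.log (Zword A φ a k) / k) :=
  Filter.isBoundedUnder_of_eventually_le (a := Real.log (Zword A φ a 1))
    (Filter.eventually_atTop.mpr ⟨1, logZ_div_bounded_above hF hx₀ a⟩)

lemma pressure_cobounded [Fintype S] {A : S → S → Bool} {φ : (ℕ → S) → ℝ} {F : ℝ}
    (hF : ∀ y ∈ SFT A, |φ y| ≤ F) {x₀ : ℕ → S} (hx₀ : x₀ ∈ SFT A) (a : ℝ) :
    Filter.IsCoboundedUnder (· ≤ ·) Filter.atTop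
      (fun k : ℕ => Real.log (Zword A φ a k) / k) := by
  refine Filter.IsBoundedUnder.isCoboundedUnder_le ?_
  refine ⟨-(|a| * F), ?_⟩
  simp only [Filter.eventually_map]
  exact Filter.eventually_atTop.mpr ⟨1, logZ_div_bounded_below hF hx₀ a⟩

lemma pressure_lipschitz [Fintype S] {A : S → S → Bool} {φ : (ℕ → S) → ℝ} {F : ℝ}
    (hF : ∀ y ∈ SFT A, |φ y| ≤ F) {x₀ : ℕ → S} (hx₀ : x₀ ∈ SFT A) (a b : ℝ) :
    pressureA A φ a ≤ pressureA A φ b + |a - b| * F := by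
  have hpt : ∀ k : ℕ, 1 ≤ k → Real.log (Zword A φ a k) / k ≤
      Real.log (Zword A φ b k) / k + |a - b| * F := by
    intro k hk
    have hk0 : (0:ℝ) < k := by exact_mod_cast hk
    have h1 := Zword_lipschitz (φ := φ) hF a b k
    have h2 : Real.log (Zword A φ a k) ≤ k * (|a - b| * F) + Real.log (Zword A φ b k) := by
      calc Real.log (Zword A φ a k) ≤
            Real.log (Real.exp (k * (|a - b| * F)) * Zword A φ b k) :=
            Real.log_le_log (Zword_pos hF hx₀ a k) h1
        _ = k * (|a - b| * F) + Real.log (Zword A φ b k) := by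
            rw [Real.log_mul (Real.exp_ne_zero _) (Zword_pos hF hx₀ b k).ne', Real.log_exp]
    rw [div_le_iff₀ hk0] at *
    calc Real.log (Zword A φ a k) ≤ k * (|a - b| * F) + Real.log (Zword A φ b k) := h2
      _ ≤ k * (|a - b| * F) + Real.log (Zword A φ b k) / k * k := by
          rw [div_mul_cancel₀ _ hk0.ne']
      _ = (Real.log (Zword A φ b k) / k + |a - b| * F) * k := by ring
  unfold pressureA
  have heq := limsup_add_const Filter.atTop
    (fun k : ℕ => Real.log (Zword A φ b k) / k) (|a - b| * F)
    (pressure_bddAbove hF hx₀ b) (pressure_cobounded hF hx₀ b)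
  rw [← heq]
  refine Filter.limsup_le_limsup ?_ (pressure_cobounded hF hx₀ a) ?_
  · exact Filter.eventually_atTop.mpr ⟨1, hpt⟩
  · refine Filter.isBoundedUnder_of_eventually_le (a := Real.log (Zword A φ b 1) + |a - b| * F) ?_
    refine Filter.eventually_atTop.mpr ⟨1, fun k hk => ?_⟩
    exact add_le_add (logZ_div_bounded_above hF hx₀ b k hk) le_rfl

lemma exists_good_m [Fintype S] {A : S → S → Bool} {φ : (ℕ → S) → ℝ} {F : ℝ}
    (hF : ∀ y ∈ SFT A, |φ y| ≤ F) {x₀ : ℕ → S} (hx₀ : x₀ ∈ SFT A) (a : ℝ)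
    {ε : ℝ} (hε : 0 < ε) :
    ∃ m : ℕ, 1 ≤ m ∧ Real.log (Zword A φ a m) / m ≤ pressureA A φ a + ε := by
  by_contra hc
  push_neg at hc
  have hfreq : ∃ᶠ k : ℕ in Filter.atTop,
      pressureA A φ a + ε ≤ Real.log (Zword A φ a k) / k := by
    refine Filter.Eventually.frequently ?_
    exact Filter.eventually_atTop.mpr ⟨1, fun k hk => (hc k hk).le⟩
  have := Filter.le_limsup_of_frequently_le hfreq (pressure_bddAbove hF hx₀ a)
  unfold pressureA at *
  linarith

end Pressure2
section Pressure3
variable {S : Type*}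

lemma Zword_per_point [Fintype S] {A : S → S → Bool} {φ : (ℕ → S) → ℝ} {F : ℝ}
    (hF : ∀ y ∈ SFT A, |φ y| ≤ F) {x₀ : ℕ → S} (hx₀ : x₀ ∈ SFT A) (a : ℝ)
    {ε : ℝ} (hε : 0 < ε) :
    ∃ C > 0, ∀ k : ℕ, 1 ≤ k →
      Zword A φ a k ≤ C * Real.exp (k * (pressureA A φ a + ε)) := by
  obtain ⟨m, hm1, hgood⟩ := exists_good_m hF hx₀ a hε
  set L : ℝ := Real.log (Zword A φ a m) / m with hL
  set β : ℝ := Real.exp L with hβ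
  have hβ0 : 0 < β := Real.exp_pos _
  have hm0 : (m:ℝ) ≠ 0 := by
    have : m ≠ 0 := by omega
    exact_mod_cast this
  have hβm : β ^ m = Zword A φ a m := by
    rw [hβ, ← Real.exp_nat_mul, hL, mul_div_cancel₀ _ hm0,
      Real.exp_log (Zword_pos hF hx₀ a m)]
  have hne : (Finset.Icc 1 m).Nonempty := ⟨m, Finset.mem_Icc.mpr ⟨hm1, le_refl m⟩⟩
  set D : ℝ := (Finset.Icc 1 m).sup' hne (fun r => Zword A φ a r / β ^ r) with hD
  have hD1 : 1 ≤ D := by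
    have h1 : Zword A φ a m / β ^ m ≤ D :=
      Finset.le_sup' (f := fun r => Zword A φ a r / β ^ r) (Finset.mem_Icc.mpr ⟨hm1, le_refl m⟩)
    rwa [hβm, div_self (Zword_pos hF hx₀ a m).ne'] at h1
  have claim : ∀ k : ℕ, 1 ≤ k → Zword A φ a k ≤ D * β ^ k := by
    intro k
    induction k using Nat.strong_induction_on with
    | _ k ih =>
      intro hk1
      by_cases hkm : k ≤ m
      · have h1 : Zword A φ a k / β ^ k ≤ D :=
          Finset.le_sup' (f := fun r => Zword A φ a r / β ^ r) (Finset.mem_Icc.mpr ⟨hk1, hkm⟩)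
        have h2 : Zword A φ a k = (Zword A φ a k / β ^ k) * β ^ k :=
          (div_mul_cancel₀ _ (pow_pos hβ0 k).ne').symm
        rw [h2]
        exact mul_le_mul_of_nonneg_right h1 (pow_pos hβ0 k).le
      · push_neg at hkm
        have hsplit : m + (k - m) = k := by omega
        calc Zword A φ a k = Zword A φ a (m + (k - m)) := by rw [hsplit]
          _ ≤ Zword A φ a m * Zword A φ a (k - m) := Zword_submul hF a m (k - m)
          _ ≤ Zword A φ a m * (D * β ^ (k - m)) :=
              mul_le_mul_of_nonneg_left (ih (k - m) (by omega) (by omega))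
                (Zword_pos hF hx₀ a m).le
          _ = β ^ m * (D * β ^ (k - m)) := by rw [hβm]
          _ = D * (β ^ m * β ^ (k - m)) := by ring
          _ = D * β ^ k := by rw [← pow_add, hsplit]
  refine ⟨D, by linarith, fun k hk => ?_⟩
  refine le_trans (claim k hk) ?_
  refine mul_le_mul_of_nonneg_left ?_ (by linarith)
  have hβk : β ^ k = Real.exp (k * L) := by rw [Real.exp_nat_mul]
  rw [hβk]
  refine Real.exp_le_exp.mpr ?_
  refine mul_le_mul_of_nonneg_left hgood (Nat.cast_nonneg k)

lemma Zword_uniform [Fintype S] {A : S → S → Bool} {φ : (ℕ → S) → ℝ} {F : ℝ}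
    (hF : ∀ y ∈ SFT A, |φ y| ≤ F) (hF0 : 0 ≤ F) {x₀ : ℕ → S} (hx₀ : x₀ ∈ SFT A)
    {a₀ ε : ℝ} (ha₀ : 0 < a₀) (hε : 0 < ε) :
    ∃ C > 0, ∀ a : ℝ, |a| ≤ a₀ → ∀ k : ℕ, 1 ≤ k →
      Zword A φ a k ≤ C * Real.exp (k * (pressureA A φ a + ε)) := by
  classical
  set δ : ℝ := ε / (4 * (F + 1)) with hδdef
  have hδ : 0 < δ := by positivity
  have hδF : δ * F ≤ ε / 4 := by
    rw [hδdef, div_mul_eq_mul_div, div_le_div_iff₀ (by positivity) (by norm_num)]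
    nlinarith
  have hcov : Set.Icc (-a₀) a₀ ⊆ ⋃ b : ℝ, Metric.ball b δ := by
    intro a _
    exact Set.mem_iUnion.mpr ⟨a, Metric.mem_ball_self hδ⟩
  obtain ⟨t, ht⟩ := isCompact_Icc.elim_finite_subcover
    (fun b : ℝ => Metric.ball b δ) (fun b => Metric.isOpen_ball) hcov
  have hpp : ∀ b : ℝ, ∃ C > 0, ∀ k : ℕ, 1 ≤ k →
      Zword A φ b k ≤ C * Real.exp (k * (pressureA A φ b + ε / 2)) :=
    fun b => Zword_per_point hF hx₀ b (by linarith)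
  set Cf : ℝ → ℝ := fun b => Classical.choose (hpp b) with hCf
  have hCf0 : ∀ b, 0 < Cf b := fun b => (Classical.choose_spec (hpp b)).1
  have hCfs : ∀ b, ∀ k : ℕ, 1 ≤ k →
      Zword A φ b k ≤ Cf b * Real.exp (k * (pressureA A φ b + ε / 2)) :=
    fun b => (Classical.choose_spec (hpp b)).2
  have hsum : 0 ≤ ∑ b ∈ t, Cf b := Finset.sum_nonneg fun b _ => (hCf0 b).le
  refine ⟨1 + ∑ b ∈ t, Cf b, by linarith, fun a ha k hk => ?_⟩
  have hamem : a ∈ Set.Icc (-a₀) a₀ := by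
    rw [Set.mem_Icc]
    constructor <;> [linarith [neg_abs_le a]; linarith [le_abs_self a]]
  obtain ⟨b, hbt, hab⟩ := Set.mem_iUnion₂.mp (ht hamem)
  have habδ : |a - b| < δ := by
    rw [← Real.dist_eq]
    exact hab
  have hCfle : Cf b ≤ 1 + ∑ b' ∈ t, Cf b' := by
    have h1 : Cf b ≤ ∑ b' ∈ t, Cf b' :=
      Finset.single_le_sum (fun b' _ => (hCf0 b').le) hbt
    linarith
  have hPba : pressureA A φ b ≤ pressureA A φ a + δ * F := by
    have := pressure_lipschitz hF hx₀ b a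
    have habs : |b - a| ≤ δ := by
      rw [abs_sub_comm]
      exact habδ.le
    nlinarith [abs_nonneg (b - a)]
  calc Zword A φ a k
      ≤ Real.exp (k * (|a - b| * F)) * Zword A φ b k := Zword_lipschitz hF a b k
    _ ≤ Real.exp (k * (|a - b| * F)) * (Cf b * Real.exp (k * (pressureA A φ b + ε / 2))) := by
        refine mul_le_mul_of_nonneg_left (hCfs b k hk) (Real.exp_pos _).le
    _ = Cf b * Real.exp (k * (|a - b| * F) + k * (pressureA A φ b + ε / 2)) := by
        rw [Real.exp_add]
        ring
    _ ≤ Cf b * Real.exp (k * (pressureA A φ a + ε)) := by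
        refine mul_le_mul_of_nonneg_left ?_ (hCf0 b).le
        refine Real.exp_le_exp.mpr ?_
        have hk0 : (0:ℝ) ≤ k := Nat.cast_nonneg k
        have h1 : |a - b| * F ≤ δ * F := mul_le_mul_of_nonneg_right habδ.le hF0
        nlinarith [hPba, hδF]
    _ ≤ (1 + ∑ b' ∈ t, Cf b') * Real.exp (k * (pressureA A φ a + ε)) :=
        mul_le_mul_of_nonneg_right hCfle (Real.exp_pos _).le

end Pressure3

theorem sum_holder_norm_ruelle_iterate_indicator_bound'
    {S : Type*} [Fintype S] [Nonempty S]
    (A : S → S → Bool) (θ : ℝ) (hθ : θ ∈ Set.Ioo (0 : ℝ) 1)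
    (hne : (SFT A).Nonempty)
    (α : ℝ) (hα : α ∈ Set.Ioc (0 : ℝ) 1)
    (φ : (ℕ → S) → ℝ)
    (hφ : ∃ c : ℝ, ∀ x ∈ SFT A, ∀ y ∈ SFT A, |φ x - φ y| ≤ c * dtheta θ x y ^ α) :
    ∀ a₀ > (0 : ℝ), ∀ b₀ > (0 : ℝ), ∀ ε > (0 : ℝ), ∃ C > (0 : ℝ), ∀ k : ℕ, 1 ≤ k →
      ∀ s : ℂ, |s.re| ≤ a₀ → b₀ ≤ |s.im| →
        (∑ ω ∈ admissibleWords A k,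
            holderNormC A θ α ((ruelle A (fun x => s * (φ x : ℂ)))^[k] (chi A ω))) ≤
          C * |s.im| * θ ^ α * Real.exp (k * (pressureA A φ s.re + ε)) := by
  obtain ⟨x₀, hx₀⟩ := hne
  obtain ⟨c, hc⟩ := hφ
  set c' : ℝ := max c 0 with hc'def
  have hc'0 : 0 ≤ c' := le_max_right c 0
  have hHol : ∀ x ∈ SFT A, ∀ y ∈ SFT A, |φ x - φ y| ≤ c' * dtheta θ x y ^ α := by
    intro x hx y hy
    refine le_trans (hc x hx y hy) ?_
    exact mul_le_mul_of_nonneg_right (le_max_left c 0)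
      (Real.rpow_nonneg (dtheta_nonneg hθ.1 x y) α)
  set F : ℝ := |φ x₀| + c' with hFdef
  have hF0 : 0 ≤ F := by positivity
  have hF : ∀ y ∈ SFT A, |φ y| ≤ F := by
    intro y hy
    have h1 := hHol y hy x₀ hx₀
    have h2 : dtheta θ y x₀ ^ α ≤ 1 := by
      refine Real.rpow_le_one (dtheta_nonneg hθ.1 _ _) ?_ hα.1.le
      have := dtheta_le_pow hθ.1 hθ.2.le (x := y) (y := x₀) (m := 0)
        (fun i hi => absurd hi (by omega))
      simpa using this
    have h3 : c' * dtheta θ y x₀ ^ α ≤ c' := by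
      nlinarith [Real.rpow_nonneg (dtheta_nonneg hθ.1 y x₀) α]
    calc |φ y| = |(φ y - φ x₀) + φ x₀| := by ring_nf
      _ ≤ |φ y - φ x₀| + |φ x₀| := abs_add_le _ _
      _ ≤ c' + |φ x₀| := add_le_add (le_trans h1 h3) (le_refl _)
      _ = F := by rw [hFdef]; ring
  intro a₀ ha₀ b₀ hb₀ ε hε
  obtain ⟨C₀, hC₀, hC₀s⟩ := Zword_uniform hF hF0 hx₀ ha₀ hε
  have hτ0 : 0 < θ ^ α := Real.rpow_pos_of_pos hθ.1 α
  have hτ1 : θ ^ α < 1 := Real.rpow_lt_one hθ.1.le hθ.2 hα.1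
  set c₁ : ℝ := c' / (1 - θ ^ α) with hc₁def
  have hc₁0 : 0 ≤ c₁ := div_nonneg hc'0 (by linarith)
  set K₂ : ℝ := 2 * c₁ + 3 with hK₂def
  have hK₂0 : 0 < K₂ := by linarith
  set K₃ : ℝ := (1 + a₀) / b₀ + 1 with hK₃def
  have hK₃0 : 0 < K₃ := by positivity
  refine ⟨K₂ * K₃ * C₀ / θ ^ α, by positivity, fun k hk s hsre hsim => ?_⟩
  have hk0 : 0 < k := hk
  have h1 : (∑ ω ∈ admissibleWords A k,
      holderNormC A θ α ((ruelle A (fun x => s * (φ x : ℂ)))^[k] (chi A ω))) ≤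
      ((2 * c₁ + 2) * (1 + ‖s‖) + 1) * Zword A φ s.re k := by
    unfold Zword
    rw [Finset.mul_sum]
    refine Finset.sum_le_sum fun ω _ => ?_
    exact holderNormC_ruelle_iterate_chi_le hθ hα hc'0 hHol hF hk0 ω s
  have habss : 0 ≤ ‖s‖ := norm_nonneg s
  have him0 : 0 < |s.im| := lt_of_lt_of_le hb₀ hsim
  have e1 : 1 + ‖s‖ ≤ K₃ * |s.im| := by
    calc 1 + ‖s‖ ≤ 1 + (|s.re| + |s.im|) :=
          add_le_add le_rfl (Complex.norm_le_abs_re_add_abs_im s)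
      _ ≤ 1 + a₀ + |s.im| := by linarith
      _ = ((1 + a₀) / b₀) * b₀ + |s.im| := by rw [div_mul_cancel₀ _ hb₀.ne']
      _ ≤ ((1 + a₀) / b₀) * |s.im| + |s.im| := by
          refine add_le_add (mul_le_mul_of_nonneg_left hsim (by positivity)) le_rfl
      _ = K₃ * |s.im| := by rw [hK₃def]; ring
  have h2 : (2 * c₁ + 2) * (1 + ‖s‖) + 1 ≤ K₂ * (K₃ * |s.im|) := by
    have e2 : (2 * c₁ + 2) * (1 + ‖s‖) + 1 ≤ K₂ * (1 + ‖s‖) := by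
      rw [hK₂def]
      nlinarith
    exact le_trans e2 (mul_le_mul_of_nonneg_left e1 hK₂0.le)
  have h3 : Zword A φ s.re k ≤ C₀ * Real.exp (k * (pressureA A φ s.re + ε)) :=
    hC₀s s.re hsre k hk
  have hZ0 : 0 ≤ Zword A φ s.re k := Zword_nonneg A φ s.re k
  have h4 := le_trans h1 (mul_le_mul_of_nonneg_right h2 hZ0)
  have h5 : K₂ * (K₃ * |s.im|) * Zword A φ s.re k ≤
      K₂ * (K₃ * |s.im|) * (C₀ * Real.exp (k * (pressureA A φ s.re + ε))) := by
    refine mul_le_mul_of_nonneg_left h3 (by positivity)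
  have heq : K₂ * K₃ * C₀ / θ ^ α * |s.im| * θ ^ α * Real.exp (k * (pressureA A φ s.re + ε)) =
      K₂ * (K₃ * |s.im|) * (C₀ * Real.exp (k * (pressureA A φ s.re + ε))) := by
    field_simp
  rw [heq]
  exact le_trans h4 h5


/-- Let `φ` be `α`-Hölder with respect to `d_θ` on the nonempty
subshift `Σ_A^+`.  For all `a₀ > 0`, `b₀ > 0`, `ε > 0` there is `C_ε > 0` (depending
only on `ε`, `a₀`, `b₀`, `θ`, `α`, `φ`) such that for all `k ≥ 1` and all `s ∈ ℂ`
with `|Re s| ≤ a₀` and `|Im s| ≥ b₀`,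
`Σ_{|ω| = k} ‖L_{sφ}^k χ_ω‖_{C^{0,α}} ≤ C_ε · |Im s| · θ^α · e^{k(P((Re s)φ) + ε)}`. -/
theorem sum_holder_norm_ruelle_iterate_indicator_bound
    [Fintype S] [Nonempty S]
    (A : S → S → Bool) (θ : ℝ) (hθ : θ ∈ Set.Ioo (0 : ℝ) 1)
    (hne : (SFT A).Nonempty)
    (α : ℝ) (hα : α ∈ Set.Ioc (0 : ℝ) 1)
    (φ : (ℕ → S) → ℝ)
    (hφ : ∃ c : ℝ, ∀ x ∈ SFT A, ∀ y ∈ SFT A, |φ x - φ y| ≤ c * dtheta θ x y ^ α) :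
    ∀ a₀ > (0 : ℝ), ∀ b₀ > (0 : ℝ), ∀ ε > (0 : ℝ), ∃ C > (0 : ℝ), ∀ k : ℕ, 1 ≤ k →
      ∀ s : ℂ, |s.re| ≤ a₀ → b₀ ≤ |s.im| →
        (∑ ω ∈ admissibleWords A k,
            holderNormC A θ α ((ruelle A (fun x => s * (φ x : ℂ)))^[k] (chi A ω))) ≤
          C * |s.im| * θ ^ α * Real.exp (k * (pressureA A φ s.re + ε)) := by
  exact sum_holder_norm_ruelle_iterate_indicator_bound' A θ hθ hne α hα φ hφ
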